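/- Let λ ∈ ℝ and let μ be a nonzero λ-eigenmeasure of r̃+J̃. Then μ(A) > 0 for every Borel set A ⊆ S with positive Lebesgue measure. -/

import Mathlib

open MeasureTheory Filter Topology

/-- A finite positive Borel measure μ on S is a λ-eigenmeasure of the operator r̃+J̃ if for
every Borel set A ⊆ S one has ∫_A r dμ + ∫_A (∫_S K(y,x) μ(dy)) dx = λ μ(A). -/
def IsEigenmeasure {d : ℕ} (S : Set (EuclideanSpace ℝ (Fin d)))
    (r : EuclideanSpace ℝ (Fin d) → ℝ)
    (K : EuclideanSpace ℝ (Fin d) → EuclideanSpace ℝ (Fin d) → ℝ)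
    (lam : ℝ) (μ : MeasureTheory.Measure (EuclideanSpace ℝ (Fin d))) : Prop :=
  ∀ A : Set (EuclideanSpace ℝ (Fin d)), MeasurableSet A → A ⊆ S →
    (∫ x in A, r x ∂μ) + (∫ x in A, (∫ y in S, K y x ∂μ)) = lam * (μ A).toReal

/-! The function `J x = ∫ y in S, K y x ∂μ` is continuous and nonnegative on `S`. If `μ A = 0`,
the eigen-equation on `A` reduces to `∫ x in A, J x = 0`, so when `A` has positive Lebesgue
measure `J` vanishes at some `w ∈ A`; as `K > 0` near the diagonal, this forces
`μ (ball w ε₀) = 0`. Applied to small open balls in `Ω`, this shows that the support of `μ`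
spreads from a point to everything in `Ω` within distance `ε₀`, so by connectedness it contains
`closure Ω = S`, which is incompatible with `μ (ball w ε₀) = 0`. -/

open Metric

theorem ContinuousOn.setIntegral_of_isCompact {X Y E : Type*} [TopologicalSpace X]
    [FirstCountableTopology X] [TopologicalSpace Y] [T2Space Y]
    [MeasurableSpace Y] [OpensMeasurableSpace Y] [NormedAddCommGroup E] [NormedSpace ℝ E]
    [SecondCountableTopologyEither Y E]
    {μ : Measure Y} [IsFiniteMeasureOnCompacts μ] {f : X → Y → E} {t : Set X} {s : Set Y}
    (hf : ContinuousOn (Function.uncurry f) (t ×ˢ s)) (ht : IsCompact t) (hs : IsCompact s) :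
    ContinuousOn (fun x => ∫ y in s, f x y ∂μ) t := by
  obtain ⟨M, hM⟩ := (ht.prod hs).exists_bound_of_continuousOn hf
  have hslice : ∀ x ∈ t, ContinuousOn (f x) s := fun x hx =>
    hf.comp (Continuous.prodMk_right x).continuousOn fun y hy => Set.mk_mem_prod hx hy
  intro x₀ hx₀
  refine continuousWithinAt_of_dominated (bound := fun _ => M) ?_ ?_
    (integrableOn_const hs.measure_ne_top) ?_
  · filter_upwards [self_mem_nhdsWithin] with x hx
    exact (hslice x hx).aestronglyMeasurable hs.measurableSet
  · filter_upwards [self_mem_nhdsWithin] with x hx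
    filter_upwards [ae_restrict_mem hs.measurableSet] with y hy
    exact hM (x, y) (Set.mk_mem_prod hx hy)
  · filter_upwards [ae_restrict_mem hs.measurableSet] with y hy
    exact (hf.comp (Continuous.prodMk_left y).continuousOn
      fun x hx => Set.mk_mem_prod hx hy) x₀ hx₀

theorem exists_eq_zero_of_setIntegral_eq_zero {X : Type*} [MeasurableSpace X] {ν : Measure X}
    {f : X → ℝ} {A : Set X} (hA : MeasurableSet A) (hνA : ν A ≠ 0) (hf : IntegrableOn f A ν)
    (hf_nonneg : ∀ x ∈ A, 0 ≤ f x) (h : ∫ x in A, f x ∂ν = 0) : ∃ x ∈ A, f x = 0 := by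
  have : NeBot (ae (ν.restrict A)) := ae_restrict_neBot.mpr hνA
  have hf_ae : f =ᵐ[ν.restrict A] 0 :=
    (integral_eq_zero_iff_of_nonneg_ae (ae_restrict_of_forall_mem hA hf_nonneg) hf).mp h
  obtain ⟨x, hx, hxA⟩ := (hf_ae.and (ae_restrict_mem hA)).exists
  exact ⟨x, hxA, hx⟩

theorem setIntegral_kernel_pos_of_measure_ball_pos {X : Type*} [PseudoMetricSpace X]
    [MeasurableSpace X] {μ : Measure X} {S : Set X} {K : X → X → ℝ} {ε : ℝ} {w : X}
    (hS : MeasurableSet S) (hμS : μ Sᶜ = 0) (hK : IntegrableOn (fun y => K y w) S μ)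
    (hK_nonneg : ∀ y ∈ S, 0 ≤ K y w)
    (hK_pos : ∀ y ∈ S, dist w y < ε → 0 < K y w) (hball : 0 < μ (ball w ε)) :
    0 < ∫ y in S, K y w ∂μ := by
  rw [setIntegral_pos_iff_support_of_nonneg_ae (ae_restrict_of_forall_mem hS hK_nonneg) hK]
  calc 0 < μ (ball w ε) := hball
    _ = μ (ball w ε ∩ S) := (measure_inter_conull hμS).symm
    _ ≤ μ (Function.support (fun y => K y w) ∩ S) :=
      measure_mono fun y ⟨hy, hyS⟩ => ⟨(hK_pos y hyS (mem_ball'.mp hy)).ne', hyS⟩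

section Support

variable {X : Type*} [PseudoMetricSpace X] [MeasurableSpace X] {μ : Measure X} {Ω : Set X}
  {ε : ℝ}

theorem MeasureTheory.Measure.mem_support_of_dist_lt (hΩ : IsOpen Ω)
    (h : ∀ U, IsOpen U → U ⊆ Ω → U.Nonempty → μ U = 0 → ∃ w ∈ U, μ (ball w ε) = 0)
    {x z : X} (hx : x ∈ μ.support) (hz : z ∈ Ω) (hzx : dist z x < ε) : z ∈ μ.support := by
  by_contra hz_supp
  obtain ⟨U, hU, hμU⟩ := Measure.notMem_support_iff_exists.mp hz_supp
  set V := interior (U ∩ Ω ∩ ball z (ε - dist z x))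
  have hV : V ∈ 𝓝 z := interior_mem_nhds.mpr <|
    inter_mem (inter_mem hU (hΩ.mem_nhds hz)) (ball_mem_nhds z (by linarith))
  have hVsub : V ⊆ U ∩ Ω ∩ ball z (ε - dist z x) := interior_subset
  obtain ⟨w, hwV, hw⟩ := h V isOpen_interior (fun y hy => (hVsub hy).1.2) ⟨z, mem_of_mem_nhds hV⟩
    (measure_mono_null (fun y hy => (hVsub hy).1.1) hμU)
  have hwx : dist w x < ε := calc
    dist w x ≤ dist w z + dist z x := dist_triangle w z x
    _ < ε := by linarith [mem_ball.mp (hVsub hwV).2]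
  exact ((Measure.mem_support_iff_forall x).mp hx _
    (isOpen_ball.mem_nhds (mem_ball'.mpr hwx))).ne' hw

theorem MeasureTheory.Measure.closure_subset_support [HereditarilyLindelofSpace X]
    (hΩ : IsOpen Ω) (hΩ_conn : IsPreconnected Ω) (hε : 0 < ε) (hμ : 0 < μ (closure Ω))
    (h : ∀ U, IsOpen U → U ⊆ Ω → U.Nonempty → μ U = 0 → ∃ w ∈ U, μ (ball w ε) = 0) :
    closure Ω ⊆ μ.support := by
  have hopen : IsOpen (Ω ∩ μ.support) := isOpen_iff_mem_nhds.mpr fun x ⟨hxΩ, hx⟩ =>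
    mem_of_superset (inter_mem (hΩ.mem_nhds hxΩ) (ball_mem_nhds x hε))
      fun z ⟨hzΩ, hzx⟩ => ⟨hzΩ, Measure.mem_support_of_dist_lt hΩ h hx hzΩ (mem_ball.mp hzx)⟩
  obtain ⟨x, hxΩ, hx⟩ := Measure.nonempty_inter_support_of_pos hμ
  obtain ⟨z, hzΩ, hxz⟩ := Metric.mem_closure_iff.mp hxΩ ε hε
  have hΩ_supp : Ω ⊆ Ω ∩ μ.support := by
    refine hΩ_conn.subset_of_closure_inter_subset hopen
      ⟨z, hzΩ, hzΩ, Measure.mem_support_of_dist_lt hΩ h hx hzΩ (by rwa [dist_comm])⟩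
      fun y ⟨hy, hyΩ⟩ => ⟨hyΩ, ?_⟩
    exact closure_minimal Set.inter_subset_right Measure.isClosed_support hy
  exact closure_minimal (fun y hy => (hΩ_supp hy).2) Measure.isClosed_support

end Support

namespace IsEigenmeasure

variable {d : ℕ} {S : Set (EuclideanSpace ℝ (Fin d))} {r : EuclideanSpace ℝ (Fin d) → ℝ}
  {K : EuclideanSpace ℝ (Fin d) → EuclideanSpace ℝ (Fin d) → ℝ} {lam : ℝ}
  {μ : Measure (EuclideanSpace ℝ (Fin d))} {A : Set (EuclideanSpace ℝ (Fin d))}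

theorem setIntegral_eq_zero_of_measure_eq_zero (hμ : IsEigenmeasure S r K lam μ)
    (hA : MeasurableSet A) (hAS : A ⊆ S) (hμA : μ A = 0) :
    ∫ x in A, (∫ y in S, K y x ∂μ) = 0 := by
  have h := hμ A hA hAS
  rwa [Measure.restrict_eq_zero.mpr hμA, integral_zero_measure, zero_add, hμA,
    ENNReal.toReal_zero, mul_zero] at h

theorem exists_measure_ball_eq_zero [IsFiniteMeasureOnCompacts μ] {ε : ℝ}
    (hμ : IsEigenmeasure S r K lam μ) (hS : IsCompact S)
    (hK : ContinuousOn (fun q : EuclideanSpace ℝ (Fin d) × EuclideanSpace ℝ (Fin d) =>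
      K q.1 q.2) (S ×ˢ S))
    (hK_nonneg : ∀ x ∈ S, ∀ y ∈ S, 0 ≤ K x y)
    (hK_pos : ∀ x ∈ S, ∀ y ∈ S, dist y x < ε → 0 < K x y) (hμS : μ Sᶜ = 0)
    (hA : MeasurableSet A) (hAS : A ⊆ S) (hvol : volume A ≠ 0) (hμA : μ A = 0) :
    ∃ w ∈ A, μ (ball w ε) = 0 := by
  have hJ : ContinuousOn (fun x => ∫ y in S, K y x ∂μ) S :=
    ContinuousOn.setIntegral_of_isCompact (f := fun x y => K y x)
      (hK.comp continuous_swap.continuousOn fun q hq => ⟨hq.2, hq.1⟩) hS hS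
  obtain ⟨w, hwA, hw⟩ := exists_eq_zero_of_setIntegral_eq_zero hA hvol
    ((hJ.integrableOn_compact hS).mono_set hAS)
    (fun x hx => setIntegral_nonneg hS.measurableSet fun y hy => hK_nonneg y hy x (hAS hx))
    (hμ.setIntegral_eq_zero_of_measure_eq_zero hA hAS hμA)
  refine ⟨w, hwA, of_not_not fun hball => ?_⟩
  have hwS := hAS hwA
  have hslice : ContinuousOn (fun y => K y w) S :=
    hK.comp (Continuous.prodMk_left w).continuousOn fun y hy => ⟨hy, hwS⟩
  exact (setIntegral_kernel_pos_of_measure_ball_pos hS.measurableSet hμS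
    (hslice.integrableOn_compact hS) (fun y hy => hK_nonneg y hy w hwS)
    (fun y hy => hK_pos y hy w hwS) (pos_iff_ne_zero.mpr hball)).ne' hw

end IsEigenmeasure

theorem stmt4_general {d : ℕ}
    (Ω S : Set (EuclideanSpace ℝ (Fin d)))
    (hΩopen : IsOpen Ω)
    (hΩconn : IsConnected Ω) (hSdef : S = closure Ω)
    (hScomp : IsCompact S)
    (r : EuclideanSpace ℝ (Fin d) → ℝ)
    (K : EuclideanSpace ℝ (Fin d) → EuclideanSpace ℝ (Fin d) → ℝ)
    (hK : ContinuousOn (fun q : EuclideanSpace ℝ (Fin d) × EuclideanSpace ℝ (Fin d) =>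
      K q.1 q.2) (S ×ˢ S))
    (hKnn : ∀ x ∈ S, ∀ y ∈ S, 0 ≤ K x y)
    (ε₀ c₀ : ℝ) (hε₀ : 0 < ε₀) (hc₀ : 0 < c₀)
    (hKlb : ∀ x ∈ S, ∀ y ∈ S, dist y x < ε₀ → c₀ < K x y)
    (μ : Measure (EuclideanSpace ℝ (Fin d))) [IsFiniteMeasure μ]
    (hμne : μ ≠ 0) (hμS : μ Sᶜ = 0)
    (lam : ℝ) (hμ : IsEigenmeasure S r K lam μ) :
    ∀ A : Set (EuclideanSpace ℝ (Fin d)), MeasurableSet A → A ⊆ S →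
      0 < volume A → 0 < μ A := by
  have hnull {A} := hμ.exists_measure_ball_eq_zero (A := A) hScomp hK hKnn
    (fun x hx y hy h => hc₀.trans (hKlb x hx y hy h)) hμS
  have hμ_pos : 0 < μ (closure Ω) := by
    rw [← hSdef, measure_congr (ae_eq_univ.mpr hμS)]
    exact Measure.measure_univ_pos.mpr hμne
  have hS_supp : S ⊆ μ.support := hSdef ▸
    Measure.closure_subset_support hΩopen hΩconn.isPreconnected hε₀ hμ_pos
      fun U hU hUΩ hUne hμU => hnull hU.measurableSet (hUΩ.trans (hSdef ▸ subset_closure))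
        (hU.measure_pos volume hUne).ne' hμU
  intro A hA hAS hvol
  refine pos_iff_ne_zero.mpr fun hμA => ?_
  obtain ⟨w, hwA, hw⟩ := hnull hA hAS hvol.ne' hμA
  exact ((Measure.mem_support_iff_forall w).mp (hS_supp (hAS hwA)) _
    (ball_mem_nhds w hε₀)).ne' hw

/-- If μ is a nonzero λ-eigenmeasure of r̃+J̃, then μ(A) > 0 for every Borel set A ⊆ S of
positive Lebesgue measure. -/
theorem stmt4 {d : ℕ}
    (Ω S : Set (EuclideanSpace ℝ (Fin d)))
    (hΩne : Ω.Nonempty) (hΩopen : IsOpen Ω) (hΩbdd : Bornology.IsBounded Ω)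
    (hΩconn : IsConnected Ω) (hSdef : S = closure Ω)
    (hScomp : IsCompact S) (hSvol : 0 < volume S)
    (r : EuclideanSpace ℝ (Fin d) → ℝ) (hr : ContinuousOn r S)
    (hrpos : ∀ x ∈ S, 0 < r x)
    (K : EuclideanSpace ℝ (Fin d) → EuclideanSpace ℝ (Fin d) → ℝ)
    (hK : ContinuousOn (fun q : EuclideanSpace ℝ (Fin d) × EuclideanSpace ℝ (Fin d) =>
      K q.1 q.2) (S ×ˢ S))
    (hKnn : ∀ x ∈ S, ∀ y ∈ S, 0 ≤ K x y)
    (ε₀ c₀ : ℝ) (hε₀ : 0 < ε₀) (hc₀ : 0 < c₀)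
    (hKlb : ∀ x ∈ S, ∀ y ∈ S, dist y x < ε₀ → c₀ < K x y)
    (μ : Measure (EuclideanSpace ℝ (Fin d))) [IsFiniteMeasure μ]
    (hμne : μ ≠ 0) (hμS : μ Sᶜ = 0)
    (lam : ℝ) (hμ : IsEigenmeasure S r K lam μ) :
    ∀ A : Set (EuclideanSpace ℝ (Fin d)), MeasurableSet A → A ⊆ S →
      0 < volume A → 0 < μ A :=
  stmt4_general Ω S hΩopen hΩconn hSdef hScomp r K hK hKnn ε₀ c₀ hε₀ hc₀ hKlb μ hμne hμS lam hμ
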